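/- Let Ω ⊂ ℝⁿ be a bounded domain and v ∈ C(closure Ω). Let Γ_v be the convex envelope of v on closure(Ω), i.e. the pointwise supremum of all convex functions on closure(Ω) lying below v. Then the Monge–Ampère measure of Γ_v gives zero mass to the set {x ∈ Ω : Γ_v(x) < v(x)}. -/

import Mathlib

/-!
If `p` is a subgradient of `Γ` at a point `x` where `Γ x < v x`, the supporting hyperplane of
slope `p` also touches `v`, hence `Γ`, at some `y ≠ x`. Both `x` and `y` are then subgradients at
`p` of the Legendre transform `Γ*` of `Γ` on the compact set `closure Ω`, so `Γ*` is not
differentiable at `p`. Since `Γ*` is Lipschitz, Rademacher's theorem makes the set of such slopes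
null. When `closure Ω` is not convex there are no convex minorants and `Γ = 0`, whose only
subgradient at an interior point is `0`.
-/

open Set MeasureTheory
open scoped RealInnerProductSpace

/-- The image of a set `S` under the subdifferential of `u` (relative to the domain `Ω`). -/
def subdiffImage {n : ℕ} (Ω : Set (EuclideanSpace ℝ (Fin n)))
    (u : EuclideanSpace ℝ (Fin n) → ℝ) (S : Set (EuclideanSpace ℝ (Fin n))) :
    Set (EuclideanSpace ℝ (Fin n)) :=
  ⋃ x ∈ S, {p | ∀ y ∈ Ω, u x + ⟪p, y - x⟫ ≤ u y}

variable {E : Type*} [NormedAddCommGroup E] [InnerProductSpace ℝ E]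

theorem fderiv_apply_eq_inner_of_subgradient {f : E → ℝ} {p x : E}
    (hf : DifferentiableAt ℝ f p) (hx : ∀ q, f p + ⟪x, q - p⟫ ≤ f q) (d : E) :
    fderiv ℝ f p d = ⟪x, d⟫ := by
  have hmin : IsLocalMin (fun q => f q - innerSL ℝ x q) p :=
    Filter.Eventually.of_forall fun q => by
      have := hx q
      simp only [innerSL_apply_apply, inner_sub_right] at this ⊢
      linarith
  have := congrArg (· d) (hmin.hasFDerivAt_eq_zero (hf.hasFDerivAt.sub (innerSL ℝ x).hasFDerivAt))
  simpa [sub_eq_zero] using this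

theorem not_differentiableAt_of_two_subgradients {f : E → ℝ} {p x y : E}
    (hx : ∀ q, f p + ⟪x, q - p⟫ ≤ f q) (hy : ∀ q, f p + ⟪y, q - p⟫ ≤ f q) (hxy : x ≠ y) :
    ¬ DifferentiableAt ℝ f p := fun hf =>
  hxy <| ext_inner_right ℝ fun d => by
    rw [← fderiv_apply_eq_inner_of_subgradient hf hx, fderiv_apply_eq_inner_of_subgradient hf hy]

theorem eq_zero_of_isLocalMax_inner {p x : E} (h : IsLocalMax (fun y => ⟪p, y⟫) x) : p = 0 := by
  have := congrArg (· p) (h.hasFDerivAt_eq_zero (innerSL ℝ p).hasFDerivAt)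
  simpa using this

section Conjugate

/-- The Legendre transform of `g` restricted to `K`. -/
noncomputable def conjugateOn (K : Set E) (g : E → ℝ) (q : E) : ℝ :=
  sSup ((fun z => ⟪q, z⟫ - g z) '' K)

variable {K : Set E} {g : E → ℝ}

theorem bddAbove_image_inner_sub (hK : Bornology.IsBounded K) (hg : BddBelow (g '' K)) (q : E) :
    BddAbove ((fun z => ⟪q, z⟫ - g z) '' K) := by
  obtain ⟨R, hR⟩ := hK.subset_closedBall 0
  obtain ⟨m, hm⟩ := hg
  refine ⟨‖q‖ * R - m, ?_⟩
  rintro _ ⟨z, hz, rfl⟩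
  have hzR : ‖z‖ ≤ R := by simpa using hR hz
  have := hm (mem_image_of_mem g hz)
  nlinarith [real_inner_le_norm q z, norm_nonneg q]

theorem inner_sub_le_conjugateOn (hK : Bornology.IsBounded K) (hg : BddBelow (g '' K)) (q : E)
    {z : E} (hz : z ∈ K) : ⟪q, z⟫ - g z ≤ conjugateOn K g q :=
  le_csSup (bddAbove_image_inner_sub hK hg q) (mem_image_of_mem _ hz)

theorem lipschitzWith_conjugateOn (hK : Bornology.IsBounded K) (hg : BddBelow (g '' K)) :
    ∃ C, LipschitzWith C (conjugateOn K g) := by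
  rcases K.eq_empty_or_nonempty with rfl | hne
  · exact ⟨0, by convert LipschitzWith.const (α := E) (0 : ℝ); simp [conjugateOn]⟩
  obtain ⟨R, hR⟩ := hK.subset_closedBall 0
  refine ⟨R.toNNReal, .of_le_add_mul _ fun q₁ q₂ => csSup_le (hne.image _) ?_⟩
  rintro _ ⟨z, hz, rfl⟩
  have hzR : ‖z‖ ≤ R := by simpa using hR hz
  have h₂ := inner_sub_le_conjugateOn hK hg q₂ hz
  have hinner : ⟪q₁ - q₂, z⟫ ≤ ‖q₁ - q₂‖ * R :=
    (real_inner_le_norm _ _).trans (mul_le_mul_of_nonneg_left hzR (norm_nonneg _))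
  rw [inner_sub_left] at hinner
  rw [dist_eq_norm]
  nlinarith [Real.le_coe_toNNReal R, norm_nonneg (q₁ - q₂)]

theorem conjugateOn_subgradient_of_isMaxOn (hK : Bornology.IsBounded K) (hg : BddBelow (g '' K))
    {p w : E} (hw : w ∈ K) (hmax : IsMaxOn (fun z => ⟪p, z⟫ - g z) K w) (q : E) :
    conjugateOn K g p + ⟪w, q - p⟫ ≤ conjugateOn K g q := by
  have hp : conjugateOn K g p ≤ ⟪p, w⟫ - g w := csSup_le ⟨_, mem_image_of_mem _ hw⟩ <| by
    rintro _ ⟨z, hz, rfl⟩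
    exact hmax hz
  have hq := inner_sub_le_conjugateOn hK hg q hw
  rw [inner_sub_right, real_inner_comm q w, real_inner_comm p w]
  linarith

end Conjugate

section Envelope

/-- The values at `x` of the convex minorants of `v` on `K`; their supremum is the convex
envelope of `v` on `K`. -/
def convexMinorantValues (K : Set E) (v : E → ℝ) (x : E) : Set ℝ :=
  {t : ℝ | ∃ φ : E → ℝ, ConvexOn ℝ K φ ∧ (∀ y ∈ K, φ y ≤ v y) ∧ φ x = t}

variable {K : Set E} {v Γ : E → ℝ}

theorem convexOn_const_add_inner (hK : Convex ℝ K) (c : ℝ) (p : E) :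
    ConvexOn ℝ K (fun y => c + ⟪p, y⟫) :=
  (convexOn_const c hK).add ((innerₛₗ ℝ p).convexOn hK)

theorem le_envelope (hΓ : ∀ x, Γ x = sSup (convexMinorantValues K v x)) {φ : E → ℝ}
    (hφ : ConvexOn ℝ K φ) (hφv : ∀ y ∈ K, φ y ≤ v y) {x : E} (hx : x ∈ K) : φ x ≤ Γ x := by
  rw [hΓ x]
  exact le_csSup ⟨v x, by rintro _ ⟨ψ, -, hψ, rfl⟩; exact hψ x hx⟩ ⟨φ, hφ, hφv, rfl⟩

theorem envelope_le (hΓ : ∀ x, Γ x = sSup (convexMinorantValues K v x)) (hK : Convex ℝ K)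
    (hv : BddBelow (v '' K)) {x : E} (hx : x ∈ K) : Γ x ≤ v x := by
  obtain ⟨m, hm⟩ := hv
  rw [hΓ x]
  refine csSup_le ⟨m, fun _ => m, convexOn_const m hK, fun y hy => hm (mem_image_of_mem v hy), rfl⟩ ?_
  rintro _ ⟨φ, -, hφ, rfl⟩
  exact hφ x hx

theorem bddBelow_image_envelope (hΓ : ∀ x, Γ x = sSup (convexMinorantValues K v x))
    (hK : Convex ℝ K) (hv : BddBelow (v '' K)) : BddBelow (Γ '' K) := by
  obtain ⟨m, hm⟩ := hv
  refine ⟨m, ?_⟩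
  rintro _ ⟨x, hx, rfl⟩
  exact le_envelope hΓ (convexOn_const m hK) (fun y hy => hm (mem_image_of_mem v hy)) hx

theorem envelope_eq_zero_of_not_convex (hΓ : ∀ x, Γ x = sSup (convexMinorantValues K v x))
    (hK : ¬ Convex ℝ K) (x : E) : Γ x = 0 := by
  have : convexMinorantValues K v x = ∅ :=
    eq_empty_of_forall_notMem fun _ ⟨φ, hφ, _⟩ => hK hφ.1
  rw [hΓ x, this, Real.sSup_empty]

/-- An affine minorant of `v` that meets the envelope somewhere must also meet `v`: otherwise it
could be raised by the positive minimum of `v` minus it, contradicting maximality of `Γ`. -/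
theorem exists_affine_eq_of_envelope_le (hΓ : ∀ x, Γ x = sSup (convexMinorantValues K v x))
    (hK : IsCompact K) (hconv : Convex ℝ K) (hv : ContinuousOn v K) {c : ℝ} {p x : E}
    (hx : x ∈ K) (hℓv : ∀ y ∈ K, c + ⟪p, y⟫ ≤ v y) (hΓx : Γ x ≤ c + ⟪p, x⟫) :
    ∃ y ∈ K, c + ⟪p, y⟫ = v y := by
  by_contra! hne
  obtain ⟨w, hw, hmin⟩ := hK.exists_isMinOn ⟨x, hx⟩ (hv.sub (by fun_prop : Continuous
    fun y => c + ⟪p, y⟫).continuousOn)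
  have hε : 0 < v w - (c + ⟪p, w⟫) := sub_pos.2 ((hℓv w hw).lt_of_ne (hne w hw))
  have hraised : ∀ y ∈ K, (c + (v w - (c + ⟪p, w⟫))) + ⟪p, y⟫ ≤ v y := fun y hy => by
    have : v w - (c + ⟪p, w⟫) ≤ v y - (c + ⟪p, y⟫) := hmin hy
    linarith
  have := le_envelope hΓ (convexOn_const_add_inner hconv _ p) hraised hx
  linarith

theorem not_differentiableAt_conjugateOn_of_lt_envelope {Ω : Set E}
    (hΓ : ∀ x, Γ x = sSup (convexMinorantValues (closure Ω) v x)) (hK : IsCompact (closure Ω))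
    (hconv : Convex ℝ (closure Ω)) (hv : ContinuousOn v (closure Ω)) {x p : E} (hx : x ∈ Ω)
    (hlt : Γ x < v x) (hp : ∀ y ∈ Ω, Γ x + ⟪p, y - x⟫ ≤ Γ y) :
    ¬ DifferentiableAt ℝ (conjugateOn (closure Ω) Γ) p := by
  set c := Γ x - ⟪p, x⟫
  have hvb : BddBelow (v '' closure Ω) := (hK.image_of_continuousOn hv).isBounded.bddBelow
  have hℓv : ∀ y ∈ closure Ω, c + ⟪p, y⟫ ≤ v y := by
    refine le_on_closure (fun y hy => ?_) (by fun_prop) hv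
    calc c + ⟪p, y⟫ = Γ x + ⟪p, y - x⟫ := by rw [inner_sub_right]; ring
      _ ≤ Γ y := hp y hy
      _ ≤ v y := envelope_le hΓ hconv hvb (subset_closure hy)
  have hℓΓ : ∀ y ∈ closure Ω, c + ⟪p, y⟫ ≤ Γ y := fun y hy =>
    le_envelope hΓ (convexOn_const_add_inner hconv c p) hℓv hy
  obtain ⟨y, hy, hyv⟩ :=
    exists_affine_eq_of_envelope_le hΓ hK hconv hv (subset_closure hx) hℓv (by simp [c])
  have hyx : y ≠ x := by
    rintro rfl
    simp only [c, sub_add_cancel] at hyv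
    exact hlt.ne hyv
  have hΓy : c + ⟪p, y⟫ = Γ y := le_antisymm (hℓΓ y hy) (hyv ▸ envelope_le hΓ hconv hvb hy)
  have hsubgrad : ∀ w ∈ closure Ω, c + ⟪p, w⟫ = Γ w →
      ∀ q, conjugateOn (closure Ω) Γ p + ⟪w, q - p⟫ ≤ conjugateOn (closure Ω) Γ q := by
    intro w hw hcontact
    refine conjugateOn_subgradient_of_isMaxOn hK.isBounded
      (bddBelow_image_envelope hΓ hconv hvb) hw fun z hz => ?_
    show ⟪p, z⟫ - Γ z ≤ ⟪p, w⟫ - Γ w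
    linarith [hℓΓ z hz]
  exact not_differentiableAt_of_two_subgradients (hsubgrad y hy hΓy)
    (hsubgrad x (subset_closure hx) (by simp [c])) hyx

end Envelope

/-- The Monge–Ampère measure of the convex envelope `Γ_v` of a continuous function `v` gives
zero mass to the set where `Γ_v < v`. -/
theorem stmt_14 {n : ℕ} (Ω : Set (EuclideanSpace ℝ (Fin n)))
    (hΩo : IsOpen Ω) (hΩb : Bornology.IsBounded Ω)
    (v : EuclideanSpace ℝ (Fin n) → ℝ) (hv : ContinuousOn v (closure Ω))
    (Γ : EuclideanSpace ℝ (Fin n) → ℝ)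
    (hΓ : ∀ x, Γ x = sSup {t : ℝ | ∃ φ : EuclideanSpace ℝ (Fin n) → ℝ,
        ConvexOn ℝ (closure Ω) φ ∧ (∀ y ∈ closure Ω, φ y ≤ v y) ∧ φ x = t}) :
    volume (subdiffImage Ω Γ {x ∈ Ω | Γ x < v x}) = 0 := by
  have hK : IsCompact (closure Ω) := hΩb.isCompact_closure
  by_cases hconv : Convex ℝ (closure Ω)
  · have hvb := (hK.image_of_continuousOn hv).isBounded.bddBelow
    obtain ⟨C, hC⟩ := lipschitzWith_conjugateOn hK.isBounded
      (bddBelow_image_envelope hΓ hconv hvb)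
    refine measure_mono_null ?_ (ae_iff.1 hC.ae_differentiableAt)
    simp only [subdiffImage, iUnion_subset_iff]
    rintro x ⟨hx, hlt⟩ p hp
    exact not_differentiableAt_conjugateOn_of_lt_envelope hΓ hK hconv hv hx hlt hp
  · have : Nontrivial (EuclideanSpace ℝ (Fin n)) := by
      by_contra h
      rw [not_nontrivial_iff_subsingleton] at h
      exact hconv (subsingleton_of_subsingleton.convex)
    refine measure_mono_null ?_ (measure_singleton 0)
    simp only [subdiffImage, iUnion_subset_iff]
    rintro x ⟨hx, -⟩ p hp
    refine eq_zero_of_isLocalMax_inner (x := x) ?_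
    filter_upwards [hΩo.mem_nhds hx] with y hy
    have := hp y hy
    simp only [envelope_eq_zero_of_not_convex hΓ hconv, inner_sub_right] at this
    linarith
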